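/- There exists a universal constant c > 0 such that for every p ∈ ℕ and every polynomial q of degree ≤ p on the interval Î = [−1,1], c · ∑_{j=0}^{p} q(ξ_j^p)² η_j^p ≤ ‖q‖²_{L²(Î)} ≤ ∑_{j=0}^{p} q(ξ_j^p)² η_j^p, where {ξ_j^p} and {η_j^p} are the p+1 Gauss–Lobatto nodes and weights on Î. -/

import Mathlib

/-!
Let `ω` be the monic polynomial whose roots are the interior nodes, so that `(1 - x²) ω` vanishes
at every node. For `q` of degree `≤ p` with `x^p`-coefficient `a`, the polynomial
`q² + a² (1 - x²) ω²` has degree `≤ 2p - 1`, hence is integrated exactly, and the discrete norm of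
`q` equals `‖q‖² + a² ∫ (1 - x²) ω²`; this gives the upper bound.

Exactness also makes `ω` orthogonal to all lower degrees for the weight `1 - x²`, so `ω` minimises
`∫ (1 - x²) r²` among monic `r` of degree `p - 1`. Testing with `r = L'/p`, `L` the monic Legendre
polynomial of degree `p`, and using `∫ (1 - x²) L'² = p (p + 1) ‖L‖²` bounds the defect by
`2 a² ‖L‖² ≤ 2 ‖q‖²`, whence `c = 1/3`.
-/

open Polynomial

noncomputable def refIntegral : ℝ[X] →ₗ[ℝ] ℝ where
  toFun P := ∫ x in (-1 : ℝ)..1, P.eval x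
  map_add' P Q := by
    simpa only [eval_add] using intervalIntegral.integral_add
      (P.continuous.intervalIntegrable _ _) (Q.continuous.intervalIntegrable _ _)
  map_smul' c P := by simp [intervalIntegral.integral_const_mul]

theorem refIntegral_apply (P : ℝ[X]) : refIntegral P = ∫ x in (-1 : ℝ)..1, P.eval x := rfl

theorem refIntegral_C_mul (c : ℝ) (P : ℝ[X]) : refIntegral (C c * P) = c * refIntegral P := by
  rw [C_mul', map_smul, smul_eq_mul]

theorem refIntegral_mul_self_nonneg {w : ℝ[X]} (hw : ∀ x ∈ Set.Icc (-1 : ℝ) 1, 0 ≤ w.eval x)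
    (P : ℝ[X]) : 0 ≤ refIntegral (w * P * P) :=
  intervalIntegral.integral_nonneg (by norm_num) fun x hx => by
    simpa [mul_assoc] using mul_nonneg (hw x hx) (mul_self_nonneg (P.eval x))

theorem eval_one_sub_X_sq_nonneg : ∀ x ∈ Set.Icc (-1 : ℝ) 1, 0 ≤ (1 - X ^ 2 : ℝ[X]).eval x :=
  fun x hx => by simpa using (sq_le_one_iff_abs_le_one x).mpr (abs_le.mpr hx)

theorem refIntegral_derivative (P : ℝ[X]) :
    refIntegral (derivative P) = P.eval 1 - P.eval (-1) :=
  intervalIntegral.integral_deriv_eq_sub' _ (funext fun _ => P.deriv)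
    (fun _ _ => P.differentiableAt) (derivative P).continuous.continuousOn

theorem refIntegral_derivative_mul (A B : ℝ[X]) :
    refIntegral (derivative A * B) =
      A.eval 1 * B.eval 1 - A.eval (-1) * B.eval (-1) - refIntegral (A * derivative B) := by
  have h := refIntegral_derivative (A * B)
  rw [derivative_mul, map_add] at h
  simp only [eval_mul] at h
  linarith

theorem refIntegral_iterate_derivative_mul {n : ℕ} {A : ℝ[X]} (hA : (X ^ 2 - 1) ^ n ∣ A)
    (B : ℝ[X]) :
    refIntegral (derivative^[n] A * B) = (-1) ^ n * refIntegral (A * derivative^[n] B) := by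
  induction n generalizing B with
  | zero => simp
  | succ n ih =>
    obtain ⟨v, hv⟩ := pow_sub_dvd_iterate_derivative_of_pow_dvd n hA
    rw [Nat.add_sub_cancel_left, pow_one] at hv
    have hboundary (x : ℝ) (hx : x ^ 2 = 1) : (derivative^[n] A).eval x = 0 := by
      simp [hv, hx]
    rw [Function.iterate_succ_apply', refIntegral_derivative_mul, hboundary 1 (by norm_num),
      hboundary (-1) (by norm_num), ih (dvd_trans (pow_dvd_pow _ n.le_succ) hA),
      Function.iterate_succ_apply]
    ring

section Quadrature

variable {ι : Type*} [Fintype ι]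

noncomputable def quadrature (ξ η : ι → ℝ) : ℝ[X] →ₗ[ℝ] ℝ := ∑ j, η j • leval (ξ j)

theorem quadrature_apply (ξ η : ι → ℝ) (Q : ℝ[X]) :
    quadrature ξ η Q = ∑ j, η j * Q.eval (ξ j) := by
  simp [quadrature]

theorem quadrature_mul_eq_zero {ξ η : ι → ℝ} {P : ℝ[X]} (hP : ∀ j, P.eval (ξ j) = 0) (Q : ℝ[X]) :
    quadrature ξ η (P * Q) = 0 := by
  simp [quadrature_apply, hP]

end Quadrature

theorem Polynomial.Monic.degree_sub_C_coeff_mul_lt {R : Type*} [Ring R] {M q : R[X]}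
    (hM : M.Monic) (hq : q.natDegree ≤ M.natDegree) :
    (q - C (q.coeff M.natDegree) * M).degree < M.natDegree := by
  rw [degree_lt_iff_coeff_zero]
  intro m hm
  rcases hm.eq_or_lt with rfl | hlt
  · simp [hM.coeff_natDegree]
  · simp [coeff_eq_zero_of_natDegree_lt (hq.trans_lt hlt), coeff_eq_zero_of_natDegree_lt hlt]

theorem Polynomial.Monic.C_inv_mul_derivative {M : ℝ[X]} {n : ℕ} (hM : M.Monic)
    (hdeg : M.natDegree = n + 1) :
    (C ((n + 1 : ℝ)⁻¹) * derivative M).Monic ∧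
      (C ((n + 1 : ℝ)⁻¹) * derivative M).natDegree = n := by
  have hcoeff : (C ((n + 1 : ℝ)⁻¹) * derivative M).coeff n = 1 := by
    rw [coeff_C_mul, coeff_derivative, ← hdeg, hM.coeff_natDegree, one_mul,
      inv_mul_cancel₀ (by positivity)]
  have hle : (C ((n + 1 : ℝ)⁻¹) * derivative M).natDegree ≤ n :=
    (natDegree_C_mul_le _ _).trans ((natDegree_derivative_le M).trans (by omega))
  exact ⟨monic_of_natDegree_le_of_coeff_eq_one n hle hcoeff,
    natDegree_eq_of_le_of_coeff_ne_zero hle (by simp [hcoeff])⟩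

theorem monic_X_sq_sub_one : (X ^ 2 - 1 : ℝ[X]).Monic := by
  simpa using monic_X_pow_sub_C (1 : ℝ) two_ne_zero

theorem natDegree_X_sq_sub_one : (X ^ 2 - 1 : ℝ[X]).natDegree = 2 := by
  simpa using natDegree_X_pow_sub_C (n := 2) (r := (1 : ℝ))

theorem natDegree_one_sub_X_sq : (1 - X ^ 2 : ℝ[X]).natDegree = 2 := by
  rw [← neg_sub, natDegree_neg, natDegree_X_sq_sub_one]

structure IsMonicOrthogonal (w : ℝ[X]) (n : ℕ) (M : ℝ[X]) : Prop where
  monic : M.Monic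
  natDegree_eq : M.natDegree = n
  integral_mul_eq_zero : ∀ s : ℝ[X], s.degree < n → refIntegral (w * M * s) = 0

namespace IsMonicOrthogonal

variable {w M : ℝ[X]} {n : ℕ}

theorem degree_sub_C_coeff_mul_lt (hM : IsMonicOrthogonal w n M) {q : ℝ[X]}
    (hq : q.natDegree ≤ n) : (q - C (q.coeff n) * M).degree < n := by
  obtain rfl := hM.natDegree_eq
  exact hM.monic.degree_sub_C_coeff_mul_lt hq

theorem integral_mul_eq (hM : IsMonicOrthogonal w n M) {f : ℝ[X]} (hf : f.natDegree ≤ n) :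
    refIntegral (w * M * f) = f.coeff n * refIntegral (w * M * M) := by
  have h := hM.integral_mul_eq_zero _ (hM.degree_sub_C_coeff_mul_lt hf)
  rw [mul_sub, map_sub, mul_left_comm, refIntegral_C_mul] at h
  linarith

theorem coeff_sq_mul_le (hM : IsMonicOrthogonal w n M)
    (hw : ∀ x ∈ Set.Icc (-1 : ℝ) 1, 0 ≤ w.eval x) {q : ℝ[X]} (hq : q.natDegree ≤ n) :
    q.coeff n ^ 2 * refIntegral (w * M * M) ≤ refIntegral (w * q * q) := by
  set s := q - C (q.coeff n) * M
  have hexpand : w * q * q =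
      C (q.coeff n ^ 2) * (w * M * M) + C (2 * q.coeff n) * (w * M * s) + w * s * s := by
    simp only [s, map_pow, map_mul, map_ofNat]
    ring
  rw [hexpand, map_add, map_add, refIntegral_C_mul, refIntegral_C_mul,
    hM.integral_mul_eq_zero s (hM.degree_sub_C_coeff_mul_lt hq)]
  linarith [refIntegral_mul_self_nonneg hw s]

theorem integral_one_sub_X_sq_mul_derivative_sq (hM : IsMonicOrthogonal 1 (n + 1) M) :
    refIntegral ((1 - X ^ 2) * derivative M * derivative M) =
      (n + 1) * (n + 2) * refIntegral (M * M) := by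
  set T := derivative ((1 - X ^ 2) * derivative M)
  have hTdeg : T.natDegree ≤ n + 1 := by
    have hM' : (derivative M).natDegree ≤ n :=
      (natDegree_derivative_le M).trans (by rw [hM.natDegree_eq]; omega)
    refine (natDegree_derivative_le _).trans (Nat.sub_le_of_le_add ?_)
    refine natDegree_mul_le.trans ?_
    rw [natDegree_one_sub_X_sq]
    omega
  have hTcoeff : T.coeff (n + 1) = -((n + 1) * (n + 2)) := by
    have hlead : M.coeff (n + 1) = 1 := hM.natDegree_eq ▸ hM.monic.coeff_natDegree
    have htop : M.coeff (n + 1 + 1 + 1) = 0 :=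
      coeff_eq_zero_of_natDegree_lt (by rw [hM.natDegree_eq]; omega)
    rw [coeff_derivative, sub_mul, one_mul, coeff_sub, coeff_X_pow_mul', if_pos (by omega),
      show n + 1 + 1 - 2 = n by omega, coeff_derivative, coeff_derivative, htop, hlead]
    push_cast
    ring
  have hboundary (x : ℝ) (hx : x ^ 2 = 1) : ((1 - X ^ 2) * derivative M).eval x = 0 := by
    simp [hx]
  have hT := hM.integral_mul_eq hTdeg
  simp only [one_mul] at hT
  rw [mul_right_comm, mul_comm, refIntegral_derivative_mul, hboundary 1 (by norm_num),
    hboundary (-1) (by norm_num), hT, hTcoeff]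
  ring

theorem integral_one_sub_X_sq_mul_self_le {ω : ℝ[X]} (hω : IsMonicOrthogonal (1 - X ^ 2) n ω)
    (hM : IsMonicOrthogonal 1 (n + 1) M) :
    refIntegral ((1 - X ^ 2) * ω * ω) ≤ 2 * refIntegral (M * M) := by
  obtain ⟨hr, hrdeg⟩ := hM.monic.C_inv_mul_derivative hM.natDegree_eq
  set r := C ((n + 1 : ℝ)⁻¹) * derivative M
  have hmin := hω.coeff_sq_mul_le eval_one_sub_X_sq_nonneg hrdeg.le
  rw [← hrdeg, hr.coeff_natDegree, one_pow, one_mul] at hmin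
  have hr_eq : refIntegral ((1 - X ^ 2) * r * r) = (n + 2) / (n + 1) * refIntegral (M * M) := by
    have : (1 - X ^ 2) * r * r =
        C ((n + 1 : ℝ)⁻¹ ^ 2) * ((1 - X ^ 2) * derivative M * derivative M) := by
      simp only [r, map_pow]
      ring
    rw [this, refIntegral_C_mul, hM.integral_one_sub_X_sq_mul_derivative_sq]
    field_simp
  have hMM : 0 ≤ refIntegral (M * M) := by
    simpa using refIntegral_mul_self_nonneg (w := 1) (by simp) M
  have hratio : (n + 2 : ℝ) / (n + 1) ≤ 2 := by
    rw [div_le_iff₀ (by positivity)]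
    linarith [(n.cast_nonneg : (0 : ℝ) ≤ n)]
  nlinarith

end IsMonicOrthogonal

-- Rodrigues' formula, normalised to be monic.
noncomputable def monicLegendre (n : ℕ) : ℝ[X] :=
  C (((2 * n).descFactorial n : ℝ)⁻¹) * derivative^[n] ((X ^ 2 - 1) ^ n)

theorem isMonicOrthogonal_monicLegendre (n : ℕ) : IsMonicOrthogonal 1 n (monicLegendre n) := by
  set R := derivative^[n] ((X ^ 2 - 1 : ℝ[X]) ^ n)
  have hdeg : ((X ^ 2 - 1 : ℝ[X]) ^ n).natDegree = n + n := by
    rw [natDegree_pow, natDegree_X_sq_sub_one]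
    ring
  have hRdeg : R.natDegree ≤ n := by
    have := natDegree_iterate_derivative ((X ^ 2 - 1 : ℝ[X]) ^ n) n
    rwa [hdeg, Nat.add_sub_cancel] at this
  have hRcoeff : R.coeff n = (2 * n).descFactorial n := by
    rw [coeff_iterate_derivative, ← hdeg, (monic_X_sq_sub_one.pow n).coeff_natDegree, hdeg,
      two_mul, nsmul_one]
  have hd : ((2 * n).descFactorial n : ℝ) ≠ 0 := by
    simpa [Nat.descFactorial_eq_zero_iff_lt] using by omega
  have hcoeff : (monicLegendre n).coeff n = 1 := by
    rw [monicLegendre, coeff_C_mul, hRcoeff, inv_mul_cancel₀ hd]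
  have hle : (monicLegendre n).natDegree ≤ n := (natDegree_C_mul_le _ _).trans hRdeg
  refine ⟨monic_of_natDegree_le_of_coeff_eq_one n hle hcoeff,
    natDegree_eq_of_le_of_coeff_ne_zero hle (by simp [hcoeff]), fun s hs => ?_⟩
  rw [one_mul, monicLegendre, mul_assoc, refIntegral_C_mul,
    refIntegral_iterate_derivative_mul dvd_rfl, iterate_derivative_eq_zero_of_degree_lt hs,
    mul_zero, map_zero, mul_zero, mul_zero]

theorem exists_monic_interior_nodal {ι : Type*} [Fintype ι] (ξ : ι → ℝ) {jm j1 : ι}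
    (hjm : ξ jm = -1) (hj1 : ξ j1 = 1) :
    ∃ ω : ℝ[X], ω.Monic ∧ ω.natDegree = Fintype.card ι - 2 ∧
      ∀ j, ((1 - X ^ 2) * ω).eval (ξ j) = 0 := by
  classical
  have hne : j1 ≠ jm := fun h => by norm_num [h, hjm] at hj1
  set S := (Finset.univ.erase jm).erase j1
  refine ⟨∏ j ∈ S, (X - C (ξ j)), monic_prod_of_monic _ _ fun j _ => monic_X_sub_C _, ?_,
    fun j => ?_⟩
  · rw [natDegree_prod_of_monic _ _ fun j _ => monic_X_sub_C _]
    simp [S, Finset.card_erase_of_mem, hne, Nat.sub_sub]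
  · by_cases hj : j ∈ S
    · simp [eval_prod, Finset.prod_eq_zero hj]
    · obtain rfl | rfl : j = j1 ∨ j = jm := by
        simp only [S, Finset.mem_erase, Finset.mem_univ] at hj
        tauto
      · simp [hj1]
      · simp [hjm]

section Lobatto

variable {ι : Type*} [Fintype ι] {ξ η : ι → ℝ} {n : ℕ} {ω : ℝ[X]}

theorem isMonicOrthogonal_of_quadrature_exact (hω : ω.Monic) (hωdeg : ω.natDegree = n)
    (hnodal : ∀ j, ((1 - X ^ 2) * ω).eval (ξ j) = 0)
    (hexact : ∀ Q : ℝ[X], Q.natDegree ≤ 2 * n + 1 → quadrature ξ η Q = refIntegral Q) :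
    IsMonicOrthogonal (1 - X ^ 2) n ω := by
  refine ⟨hω, hωdeg, fun s hs => ?_⟩
  rcases eq_or_ne s 0 with rfl | hs0
  · simp
  have hsdeg : s.natDegree < n := (natDegree_lt_iff_degree_lt hs0).mpr hs
  have hdeg : ((1 - X ^ 2) * ω * s).natDegree ≤ 2 * n + 1 := by
    have := natDegree_mul_le (p := 1 - X ^ 2) (q := ω)
    rw [natDegree_one_sub_X_sq, hωdeg] at this
    exact natDegree_mul_le.trans (by omega)
  rw [← hexact _ hdeg, quadrature_mul_eq_zero hnodal]

theorem quadrature_eq_add_of_quadrature_exact (hω : ω.Monic) (hωdeg : ω.natDegree = n)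
    (hnodal : ∀ j, ((1 - X ^ 2) * ω).eval (ξ j) = 0)
    (hexact : ∀ Q : ℝ[X], Q.natDegree ≤ 2 * n + 1 → quadrature ξ η Q = refIntegral Q)
    {Q : ℝ[X]} (hQ : Q.natDegree ≤ 2 * n + 2) :
    quadrature ξ η Q =
      refIntegral Q + Q.coeff (2 * n + 2) * refIntegral ((1 - X ^ 2) * ω * ω) := by
  set P := (X ^ 2 - 1) * ω * ω
  have hP : P.Monic := (monic_X_sq_sub_one.mul hω).mul hω
  have hPdeg : P.natDegree = 2 * n + 2 := by
    rw [(monic_X_sq_sub_one.mul hω).natDegree_mul hω, monic_X_sq_sub_one.natDegree_mul hω,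
      natDegree_X_sq_sub_one, hωdeg]
    ring
  have hlt := hP.degree_sub_C_coeff_mul_lt (q := Q) (hPdeg ▸ hQ)
  rw [hPdeg] at hlt
  have hle : (Q - C (Q.coeff (2 * n + 2)) * P).natDegree ≤ 2 * n + 1 :=
    natDegree_le_iff_coeff_eq_zero.mpr fun N hN => (degree_lt_iff_coeff_zero _ _).mp hlt N hN
  have hPnodal : quadrature ξ η (C (Q.coeff (2 * n + 2)) * P) = 0 := by
    rw [show C (Q.coeff (2 * n + 2)) * P = -((1 - X ^ 2) * ω) * (C (Q.coeff (2 * n + 2)) * ω) by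
      ring]
    exact quadrature_mul_eq_zero (fun j => by simp [hnodal j]) _
  have h := hexact _ hle
  rw [map_sub, map_sub, hPnodal, sub_zero, refIntegral_C_mul] at h
  rw [h, show P = -((1 - X ^ 2) * ω * ω) by ring, map_neg]
  ring

end Lobatto

/-- spectral equivalence of the Gauss–Lobatto discrete norm and
the `L²(-1,1)` norm on polynomials of degree `≤ p`, with constants independent
of `p`.  The Gauss–Lobatto rule with `p+1` nodes is characterized as the
quadrature rule whose nodes lie in `[-1,1]`, include both endpoints, and which
is exact for polynomials of degree `≤ 2p−1`. -/
theorem stmt_8 :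
    ∃ c : ℝ, 0 < c ∧
      ∀ p : ℕ, 1 ≤ p →
        ∀ (ξ η : Fin (p + 1) → ℝ),
          (∀ j, ξ j ∈ Set.Icc (-1 : ℝ) 1) →
          Function.Injective ξ →
          (∃ j, ξ j = -1) → (∃ j, ξ j = 1) →
          (∀ Q : Polynomial ℝ, Q.natDegree ≤ 2 * p - 1 →
            ∑ j, η j * Q.eval (ξ j) = ∫ x in (-1 : ℝ)..1, Q.eval x) →
          ∀ q : Polynomial ℝ, q.natDegree ≤ p →
            c * (∑ j, η j * (q.eval (ξ j)) ^ 2) ≤ (∫ x in (-1 : ℝ)..1, (q.eval x) ^ 2) ∧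
            (∫ x in (-1 : ℝ)..1, (q.eval x) ^ 2) ≤ ∑ j, η j * (q.eval (ξ j)) ^ 2 := by
  refine ⟨1 / 3, by norm_num, fun p hp ξ η _ _ ⟨jm, hjm⟩ ⟨j1, hj1⟩ hexact q hq => ?_⟩
  obtain ⟨n, rfl⟩ : ∃ n, p = n + 1 := ⟨p - 1, by omega⟩
  obtain ⟨ω, hω, hωdeg, hnodal⟩ := exists_monic_interior_nodal ξ hjm hj1
  rw [Fintype.card_fin, show n + 1 + 1 - 2 = n by omega] at hωdeg
  have hexact' (Q : ℝ[X]) (hQ : Q.natDegree ≤ 2 * n + 1) : quadrature ξ η Q = refIntegral Q :=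
    (quadrature_apply ξ η Q).trans (hexact Q (by omega))
  have hquad := quadrature_eq_add_of_quadrature_exact hω hωdeg hnodal hexact'
    (natDegree_mul_le.trans (by omega) : (q * q).natDegree ≤ 2 * n + 2)
  rw [show 2 * n + 2 = (n + 1) + (n + 1) by ring, coeff_mul_add_eq_of_natDegree_le hq hq] at hquad
  have hgap := refIntegral_mul_self_nonneg eval_one_sub_X_sq_nonneg ω
  have hL := isMonicOrthogonal_monicLegendre (n + 1)
  have hgap_le := (isMonicOrthogonal_of_quadrature_exact hω hωdeg hnodal hexact')
    |>.integral_one_sub_X_sq_mul_self_le hL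
  have hlegendre := hL.coeff_sq_mul_le (fun _ _ => by simp) hq
  simp only [one_mul] at hlegendre
  have hsum : ∑ j, η j * (q.eval (ξ j)) ^ 2 = quadrature ξ η (q * q) := by
    simp [quadrature_apply, sq]
  have hint : ∫ x in (-1 : ℝ)..1, (q.eval x) ^ 2 = refIntegral (q * q) := by
    simp [refIntegral_apply, sq]
  rw [hsum, hint, hquad]
  constructor <;> nlinarith [sq_nonneg (q.coeff (n + 1))]
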